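/- Let Y be a subset of the finite set X. Any word over T that is a permutator of Y factors uniquely as a concatenation of minimal permutator words of Y: if w₁w₂…w_k = w′₁w′₂…w′_ℓ where all w_i and w′_j belong to M(Y), then k = ℓ and w_i = w′_i for all i. -/

import Mathlib

/-- Realization of a word (list of generators), applied left to right. -/
def realize {X : Type*} (w : List (X → X)) : X → X :=
  fun x => w.foldl (fun a f => f a) x

/-- `w` is a word over the generator set `T`: a nonempty list of elements of `T`. -/
def IsWordOver {X : Type*} (T : Finset (X → X)) (w : List (X → X)) : Prop :=
  w ≠ [] ∧ ∀ f ∈ w, f ∈ T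

/-- A word is straight if no nonempty proper prefix realizes the identity, and distinct
nonempty prefixes realize distinct transformations. -/
def IsStraight {X : Type*} (w : List (X → X)) : Prop :=
  (∀ k, 1 ≤ k → k < w.length → realize (w.take k) ≠ id) ∧
  (∀ k l, 1 ≤ k → k ≤ w.length → 1 ≤ l → l ≤ w.length →
    realize (w.take k) = realize (w.take l) → k = l)

/-- The semigroup generated by `T`: all transformations realized by nonempty words over `T`. -/
def SgpGen {X : Type*} (T : Finset (X → X)) : Set (X → X) :=
  {s | ∃ w : List (X → X), IsWordOver T w ∧ realize w = s}

/-- A permutator word of `Y`: a word over `T` whose realization maps `Y` onto `Y`. -/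
def Permutator {X : Type*} (T : Finset (X → X)) (Y : Set X) (w : List (X → X)) : Prop :=
  IsWordOver T w ∧ realize w '' Y = Y

/-- A minimal permutator word of `Y`: a permutator word not factorizable into two
permutator words. -/
def MinPermutator {X : Type*} (T : Finset (X → X)) (Y : Set X) (w : List (X → X)) : Prop :=
  Permutator T Y w ∧ ¬ ∃ u v, w = u ++ v ∧ Permutator T Y u ∧ Permutator T Y v

/-- The full permutator semigroup `Perm(Y)` of elements of `⟨T⟩` mapping `Y` onto `Y`. -/
def PermSet {X : Type*} (T : Finset (X → X)) (Y : Set X) : Set (X → X) :=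
  {s | s ∈ SgpGen T ∧ s '' Y = Y}

/-!
The minimal permutator words form a prefix code: if a permutator `a` is a proper prefix of a
permutator `a ++ c`, then `c` maps `Y = a '' Y` onto `Y` as well, so `a ++ c` is not minimal.
A concatenation of words from a prefix code that excludes the empty word is decoded uniquely
from left to right, since of two codewords that are prefixes of the same word one is a prefix
of the other.
-/

theorem List.eq_of_flatten_eq_of_prefix_free {α : Type*} {P : List α → Prop} (hnil : ¬ P [])
    (hprefix : ∀ a b, P a → P b → a <+: b → a = b) :
    ∀ {L L' : List (List α)}, (∀ u ∈ L, P u) → (∀ u ∈ L', P u) →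
      L.flatten = L'.flatten → L = L'
  | [], [], _, _, _ => rfl
  | [], b :: _, _, hL', h => by
    have hb : b = [] := List.append_eq_nil_iff.mp h.symm |>.1
    exact absurd (hb ▸ hL' b List.mem_cons_self) hnil
  | a :: _, [], hL, _, h => by
    have ha : a = [] := List.append_eq_nil_iff.mp h |>.1
    exact absurd (ha ▸ hL a List.mem_cons_self) hnil
  | a :: t, b :: t', hL, hL', h => by
    rw [List.flatten_cons, List.flatten_cons] at h
    have ha := hL a List.mem_cons_self
    have hb := hL' b List.mem_cons_self
    have hab : a = b :=
      (List.prefix_or_prefix_of_prefix (List.prefix_append a _) (h ▸ List.prefix_append b _)).elim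
        (hprefix a b ha hb) (fun hba => (hprefix b a hb ha hba).symm)
    subst hab
    rw [List.eq_of_flatten_eq_of_prefix_free hnil hprefix
      (fun u hu => hL u (List.mem_cons_of_mem a hu)) (fun u hu => hL' u (List.mem_cons_of_mem a hu))
      (List.append_cancel_left h)]

section Permutator

variable {X : Type*} {T : Finset (X → X)} {Y : Set X} {a b c : List (X → X)}

theorem realize_append (u v : List (X → X)) : realize (u ++ v) = realize v ∘ realize u := by
  funext x
  simp [realize, List.foldl_append]

theorem Permutator.right_of_append (ha : Permutator T Y a) (hac : Permutator T Y (a ++ c))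
    (hc : c ≠ []) : Permutator T Y c := by
  refine ⟨⟨hc, fun f hf => hac.1.2 f (List.mem_append_right _ hf)⟩, ?_⟩
  simpa only [realize_append, Set.image_comp, ha.2] using hac.2

theorem MinPermutator.ne_nil (hb : MinPermutator T Y b) : b ≠ [] :=
  hb.1.1.1

theorem MinPermutator.eq_of_prefix (ha : Permutator T Y a) (hb : MinPermutator T Y b)
    (hab : a <+: b) : a = b := by
  obtain ⟨c, rfl⟩ := hab
  rcases eq_or_ne c [] with rfl | hc
  · exact (List.append_nil a).symm
  · exact absurd ⟨a, c, rfl, ha, ha.right_of_append hb.1 hc⟩ hb.2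

end Permutator

theorem minimal_permutator_factorization_unique_general
    (X : Type*) (T : Finset (X → X)) (Y : Set X)
    (L L' : List (List (X → X)))
    (hmL : ∀ u ∈ L, MinPermutator T Y u) (hmL' : ∀ u ∈ L', MinPermutator T Y u)
    (h : L.flatten = L'.flatten) :
    L = L' :=
  List.eq_of_flatten_eq_of_prefix_free (fun hnil => hnil.ne_nil rfl)
    (fun _ _ ha hb hab => hb.eq_of_prefix ha.1 hab) hmL hmL' h

/-- Unique factorization of permutator words into minimal permutator words of `Y`. -/
theorem minimal_permutator_factorization_unique
    (X : Type*) [Fintype X] [Nonempty X] (T : Finset (X → X)) (Y : Set X)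
    (L L' : List (List (X → X))) (hL : L ≠ []) (hL' : L' ≠ [])
    (hmL : ∀ u ∈ L, MinPermutator T Y u) (hmL' : ∀ u ∈ L', MinPermutator T Y u)
    (h : L.flatten = L'.flatten) :
    L = L' :=
  minimal_permutator_factorization_unique_general X T Y L L' hmL hmL' h
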